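/- For a vector x ∈ ℝ^n and a vector B ∈ ℝ^n, the product of the Jacobian of the i-th Kronecker power with B satisfies (∂x^{(i)}/∂x) B = (Σ_{k=0}^{i-1} Iₙ^{(k)} ⊗ B ⊗ Iₙ^{(i-k-1)}) x^{(i-1)}, where B is viewed as an n×1 matrix inside the Kronecker products. -/

import Mathlib

open Matrix Finset

/-- Kronecker product of `Fin`-indexed real matrices, with flattened index types. -/
def kron {m n p q : ℕ} (A : Matrix (Fin m) (Fin n) ℝ) (B : Matrix (Fin p) (Fin q) ℝ) :
    Matrix (Fin (m * p)) (Fin (n * q)) ℝ :=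
  Matrix.reindex finProdFinEquiv finProdFinEquiv (A.kroneckerMap (· * ·) B)

/-- Cast a matrix along equalities of its `Fin` dimensions. -/
def mcast {m n m' n' : ℕ} (hm : m = m') (hn : n = n') (A : Matrix (Fin m) (Fin n) ℝ) :
    Matrix (Fin m') (Fin n') ℝ :=
  Matrix.reindex (finCongr hm) (finCongr hn) A

/-- `k`-th Kronecker power of a matrix, `M^{(0)} = 1` and `M^{(k+1)} = M^{(k)} ⊗ M`. -/
def kronPow {m n : ℕ} : (k : ℕ) → Matrix (Fin m) (Fin n) ℝ → Matrix (Fin (m ^ k)) (Fin (n ^ k)) ℝ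
  | 0, _ => mcast rfl rfl (1 : Matrix (Fin 1) (Fin 1) ℝ)
  | k + 1, A => mcast (pow_succ m k).symm (pow_succ n k).symm (kron (kronPow k A) A)

/-- A vector as a column matrix. -/
def cvec {n : ℕ} (x : Fin n → ℝ) : Matrix (Fin n) (Fin 1) ℝ := Matrix.of fun i _ => x i

lemma dim_row {n i k : ℕ} (h : k < i) : n ^ k * (n * n ^ (i - k - 1)) = n ^ i := by
  have h1 : k + (1 + (i - k - 1)) = i := by omega
  calc n ^ k * (n * n ^ (i - k - 1)) = n ^ k * (n ^ 1 * n ^ (i - k - 1)) := by rw [pow_one]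
    _ = n ^ (k + (1 + (i - k - 1))) := by rw [← pow_add, ← pow_add]
    _ = n ^ i := by rw [h1]

lemma dim_one {n i k : ℕ} : (1:ℕ) ^ k * (n * 1 ^ (i - k - 1)) = n := by simp

/-- The claimed Jacobian matrix `Σ_{k=0}^{i-1} x^{(k)} ⊗ Iₙ ⊗ x^{(i-k-1)}` of `x ↦ x^{(i)}`. -/
def kronJac {n : ℕ} (i : ℕ) (x : Fin n → ℝ) : Matrix (Fin (n ^ i)) (Fin n) ℝ :=
  ∑ k : Fin i, mcast (dim_row k.isLt) dim_one
    (kron (kronPow k (cvec x)) (kron (1 : Matrix (Fin n) (Fin n) ℝ) (kronPow (i - k - 1) (cvec x))))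

/-- `x^{(i)}` as a plain vector in `ℝ^{nⁱ}`. -/
def kronPowVec {n : ℕ} (i : ℕ) (x : Fin n → ℝ) : Fin (n ^ i) → ℝ :=
  fun j => kronPow i (cvec x) j (finCongr (one_pow i).symm 0)

lemma dim_colB {n i k : ℕ} (h : k < i) : n ^ k * (1 * n ^ (i - k - 1)) = n ^ (i - 1) := by
  have h1 : k + (i - k - 1) = i - 1 := by omega
  calc n ^ k * (1 * n ^ (i - k - 1)) = n ^ k * n ^ (i - k - 1) := by rw [one_mul]
    _ = n ^ (k + (i - k - 1)) := by rw [← pow_add]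
    _ = n ^ (i - 1) := by rw [h1]

section Aux
variable {m n p q : ℕ}

lemma kron_apply (A : Matrix (Fin m) (Fin n) ℝ) (B : Matrix (Fin p) (Fin q) ℝ)
    (j : Fin (m*p)) (z : Fin (n*q)) :
    kron A B j z = A j.divNat z.divNat * B j.modNat z.modNat := by
  simp [kron, Matrix.reindex_apply, Matrix.submatrix_apply, Matrix.kroneckerMap_apply,
    finProdFinEquiv]

lemma mcast_apply {m n m' n' : ℕ} (hm : m = m') (hn : n = n') (A : Matrix (Fin m) (Fin n) ℝ)
    (j : Fin m') (z : Fin n') :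
    mcast hm hn A j z = A (Fin.cast hm.symm j) (Fin.cast hn.symm z) := by
  simp [mcast, Matrix.reindex_apply, Matrix.submatrix_apply, finCongr]

def dig {n : ℕ} (hn : 0 < n) (t j : ℕ) : Fin n := ⟨j / n^t % n, Nat.mod_lt _ hn⟩

lemma kronPow_cvec_apply (hn : 0 < n) (x : Fin n → ℝ) :
    ∀ (i : ℕ) (j : Fin (n^i)) (z : Fin (1^i)),
    kronPow i (cvec x) j z = ∏ t ∈ range i, x (dig hn t j.val)
  | 0, j, z => by
    have hj : (j:ℕ) = 0 := by have := j.isLt; simp only [pow_zero] at this; omega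
    have hz : (z:ℕ) = 0 := by have := z.isLt; simp only [pow_zero] at this; omega
    simp [kronPow, mcast_apply, Matrix.one_apply, Fin.ext_iff, hj, hz]
    exact (mcast_apply _ _ _ _ _).trans (by simp [Matrix.one_apply, Fin.ext_iff, hj, hz])
  | i + 1, j, z => by
    rw [kronPow, mcast_apply, kron_apply, kronPow_cvec_apply hn x i]
    have h1 : ∀ t, dig hn t ((Fin.cast (pow_succ n i) j).divNat).val = dig hn (t+1) j.val := by
      intro t
      simp only [dig, Fin.coe_divNat, Fin.coe_cast]
      congr 1
      rw [Nat.div_div_eq_div_mul, ← pow_succ']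
    have h2 : (cvec x) (Fin.cast (pow_succ n i) j).modNat (Fin.cast (pow_succ 1 i) z).modNat
        = x (dig hn 0 j.val) := by
      simp only [cvec, Matrix.of_apply]
      congr 1
      simp [dig, Fin.ext_iff, Fin.coe_modNat]
    rw [h2, Finset.prod_range_succ']
    congr 1
    exact Finset.prod_congr rfl fun t _ => by rw [h1]

lemma kronPow_one : ∀ (k : ℕ), kronPow k (1 : Matrix (Fin n) (Fin n) ℝ) = 1
  | 0 => by
    ext a b
    simp [kronPow, mcast_apply, Matrix.one_apply, Fin.ext_iff]
    exact (mcast_apply _ _ _ _ _).trans (by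
      have ha := a.isLt; have hb := b.isLt; simp only [pow_zero] at ha hb
      simp [Matrix.one_apply, Fin.ext_iff]; exact (if_pos (Fin.ext (by omega))).symm)
  | k + 1 => by
    rw [kronPow, kronPow_one k]
    have : kron (1 : Matrix (Fin (n^k)) (Fin (n^k)) ℝ) (1 : Matrix (Fin n) (Fin n) ℝ) = 1 := by
      unfold kron
      rw [show ((1 : Matrix (Fin (n^k)) (Fin (n^k)) ℝ).kroneckerMap (· * ·) 1) = 1 from
        Matrix.one_kronecker_one]
      simp [Matrix.reindex_apply, Matrix.submatrix_one_equiv]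
    rw [this]
    ext a b
    simp [mcast_apply, Matrix.one_apply, Fin.ext_iff]

lemma fderiv_kronPowVec (hn : 0 < n) (i : ℕ) (x B : Fin n → ℝ) :
    fderiv ℝ (kronPowVec i) x B
    = fun j : Fin (n^i) => ∑ t ∈ range i,
        (∏ s ∈ (range i).erase t, x (dig hn s j.val)) * B (dig hn t j.val) := by
  have hfun : (kronPowVec i : (Fin n → ℝ) → Fin (n^i) → ℝ)
      = fun y j => ∏ t ∈ range i, y (dig hn t j.val) := by
    funext y j
    exact kronPow_cvec_apply hn y i j _
  have hD : HasFDerivAt (kronPowVec i)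
      (ContinuousLinearMap.pi fun j : Fin (n^i) => ∑ t ∈ range i,
        (∏ s ∈ (range i).erase t, x (dig hn s j.val)) •
          ContinuousLinearMap.proj (R := ℝ) (φ := fun _ : Fin n => ℝ) (dig hn t j.val)) x := by
    rw [hfun]
    refine hasFDerivAt_pi.mpr fun j => ?_
    exact HasFDerivAt.finset_prod fun t _ => hasFDerivAt_apply (dig hn t j.val) x
  rw [hD.fderiv]
  funext j
  simp [ContinuousLinearMap.pi_apply, ContinuousLinearMap.sum_apply,
    ContinuousLinearMap.smul_apply, ContinuousLinearMap.proj_apply, smul_eq_mul]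

lemma nat_combine_div_mod (hn : 0 < n) (a b e t : ℕ) (hb : b < n ^ e) :
    ((a * n ^ e + b) / n ^ t) % n = if t < e then (b / n ^ t) % n else (a / n ^ (t - e)) % n := by
  split_ifs with h
  · have hd : a * n ^ e = a * n ^ (e - t) * n ^ t := by
      rw [mul_assoc, ← pow_add]; congr 2; omega
    rw [hd, add_comm, Nat.add_mul_div_right _ _ (pow_pos hn t)]
    have hdvd : n ∣ a * n ^ (e - t) := by
      have : n ^ (e - t) = n ^ (e - t - 1) * n := by rw [← pow_succ]; congr 1; omega
      exact ⟨a * n ^ (e - t - 1), by rw [this]; ring⟩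
    obtain ⟨c, hc⟩ := hdvd
    rw [hc, Nat.add_mul_mod_self_left]
  · have ht : n ^ t = n ^ e * n ^ (t - e) := by rw [← pow_add]; congr 1; omega
    rw [ht, ← Nat.div_div_eq_div_mul, add_comm,
      Nat.add_mul_div_right _ _ (pow_pos hn e), Nat.div_eq_of_lt hb, Nat.zero_add]

lemma nat_mod_pow_div (j e t : ℕ) (h : t < e) :
    (j % n ^ e) / n ^ t % n = j / n ^ t % n := by
  have he : n ^ e = n ^ t * n ^ (e - t) := by rw [← pow_add]; congr 1; omega
  rw [he, Nat.mod_mul_right_div_self]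
  exact Nat.mod_mod_of_dvd _ (dvd_pow_self n (by omega))

lemma term_entry (hn : 0 < n) {i : ℕ} (k : Fin i) (x B : Fin n → ℝ) (j : Fin (n^i)) :
    (mcast (dim_row k.isLt) (dim_colB k.isLt)
        (kron (kronPow k (1 : Matrix (Fin n) (Fin n) ℝ))
          (kron (cvec B) (kronPow (i - k - 1) (1 : Matrix (Fin n) (Fin n) ℝ))))).mulVec
        (kronPowVec (i - 1) x) j
    = B (dig hn (i - k - 1) j.val) *
        ∏ t ∈ (range i).erase (i - k - 1), x (dig hn t j.val) := by
  set e : ℕ := i - k - 1 with he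
  have hk : (k:ℕ) < i := k.isLt
  have hke : (k:ℕ) + (e + 1) = i := by omega
  have hpe : 0 < n ^ e := pow_pos hn e
  -- the distinguished column index
  have hc0 : (j:ℕ) / n ^ (e+1) * n ^ e + (j:ℕ) % n ^ e < n ^ (i-1) := by
    have hj : (j:ℕ) < n ^ (e+1) * n ^ (k:ℕ) := by
      have := j.isLt
      rw [← pow_add] at *
      calc (j:ℕ) < n ^ i := this
        _ = n ^ (e + 1 + (k:ℕ)) := by congr 1; omega
    have ha : (j:ℕ) / n ^ (e+1) < n ^ (k:ℕ) :=
      Nat.div_lt_of_lt_mul hj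
    calc (j:ℕ) / n ^ (e+1) * n ^ e + (j:ℕ) % n ^ e
        < (j:ℕ) / n ^ (e+1) * n ^ e + n ^ e := by
          exact Nat.add_lt_add_left (Nat.mod_lt _ hpe) _
      _ = ((j:ℕ) / n ^ (e+1) + 1) * n ^ e := by ring
      _ ≤ n ^ (k:ℕ) * n ^ e := Nat.mul_le_mul_right _ (by omega)
      _ = n ^ ((k:ℕ) + e) := by rw [← pow_add]
      _ = n ^ (i-1) := by congr 1; omega
  set c₀ : Fin (n ^ (i-1)) := ⟨(j:ℕ) / n ^ (e+1) * n ^ e + (j:ℕ) % n ^ e, hc0⟩ with hc₀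
  -- entry characterization
  have hM : ∀ c : Fin (n ^ (i-1)),
      (mcast (dim_row k.isLt) (dim_colB k.isLt)
        (kron (kronPow k (1 : Matrix (Fin n) (Fin n) ℝ))
          (kron (cvec B) (kronPow e (1 : Matrix (Fin n) (Fin n) ℝ))))) j c
      = if c = c₀ then B (dig hn e j.val) else 0 := by
    intro c
    rw [mcast_apply, kron_apply, kron_apply, kronPow_one, kronPow_one]
    simp only [Matrix.one_apply, cvec, Matrix.of_apply]
    have hBidx : B ((Fin.cast (dim_row k.isLt).symm j).modNat.divNat)
        = B (dig hn e j.val) := by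
      congr 1
      simp only [dig, Fin.ext_iff, Fin.coe_divNat, Fin.coe_modNat, Fin.coe_cast]
      rw [mul_comm n (n^e), Nat.mod_mul_right_div_self]
    rw [hBidx]
    -- turn Fin equalities in the if-conditions into Nat equalities
    have h1 : ((Fin.cast (dim_row k.isLt).symm j).divNat = (Fin.cast (dim_colB k.isLt).symm c).divNat)
        ↔ (j:ℕ) / n ^ (e+1) = (c:ℕ) / n ^ e := by
      simp only [Fin.ext_iff, Fin.coe_divNat, Fin.coe_cast]
      rw [pow_succ']
      simp
      exact Iff.rfl
    have h2 : ((Fin.cast (dim_row k.isLt).symm j).modNat.modNat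
          = (Fin.cast (dim_colB k.isLt).symm c).modNat.modNat)
        ↔ (j:ℕ) % n ^ e = (c:ℕ) % n ^ e := by
      simp only [Fin.ext_iff, Fin.coe_modNat, Fin.coe_cast]
      rw [Nat.mod_mod_of_dvd _ ⟨n, by ring⟩, one_mul, Nat.mod_mod_of_dvd _ ⟨1, by ring⟩]
    have hiff : c = c₀ ↔
        ((j:ℕ) / n ^ (e+1) = (c:ℕ) / n ^ e ∧ (j:ℕ) % n ^ e = (c:ℕ) % n ^ e) := by
      rw [hc₀, Fin.ext_iff]
      simp only [Fin.val_mk]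
      constructor
      · intro h
        constructor
        · rw [h, mul_comm ((j:ℕ) / n ^ (e+1)) (n^e), Nat.mul_add_div hpe,
            Nat.div_eq_of_lt (Nat.mod_lt _ hpe)]
          omega
        · rw [h, mul_comm ((j:ℕ) / n ^ (e+1)) (n^e), Nat.mul_add_mod,
            Nat.mod_mod_of_dvd _ dvd_rfl]
      · intro ⟨ha, hb⟩
        rw [ha, hb]
        exact (Nat.div_add_mod' _ _).symm
    simp only [h1, h2, hiff]
    by_cases hP : (j:ℕ) / n ^ (e+1) = (c:ℕ) / n ^ e <;>
      by_cases hQ : (j:ℕ) % n ^ e = (c:ℕ) % n ^ e <;> simp [hP, hQ]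
  -- sum over columns
  have hsum : (mcast (dim_row k.isLt) (dim_colB k.isLt)
        (kron (kronPow k (1 : Matrix (Fin n) (Fin n) ℝ))
          (kron (cvec B) (kronPow e (1 : Matrix (Fin n) (Fin n) ℝ))))).mulVec
        (kronPowVec (i-1) x) j
      = B (dig hn e j.val) * kronPowVec (i-1) x c₀ := by
    simp only [Matrix.mulVec, dotProduct]
    rw [Finset.sum_congr rfl fun c _ => by rw [hM c]]
    simp [ite_mul]
  rw [hsum]
  congr 1
  rw [kronPowVec, kronPow_cvec_apply hn x (i-1) c₀]
  have hdig : ∀ t, dig hn t (c₀:ℕ)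
      = if t < e then dig hn t (j:ℕ) else dig hn (t+1) (j:ℕ) := by
    intro t
    have hval : (c₀:ℕ) = (j:ℕ) / n ^ (e+1) * n ^ e + (j:ℕ) % n ^ e := rfl
    apply Fin.ext
    rw [apply_ite (Fin.val)]
    show (c₀:ℕ) / n ^ t % n = _
    rw [hval, nat_combine_div_mod hn _ _ e t (Nat.mod_lt _ hpe)]
    split_ifs with h
    · exact nat_mod_pow_div _ e t h
    · show _ = (j:ℕ) / n ^ (t+1) % n
      rw [Nat.div_div_eq_div_mul, ← pow_add]
      have hte : e + 1 + (t - e) = t + 1 := by omega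
      rw [hte]
  refine Finset.prod_nbij' (fun t => if t < e then t else t + 1)
    (fun t => if t < e then t else t - 1) ?_ ?_ ?_ ?_ ?_ <;> intro a ha
  · simp only [Finset.mem_range] at ha
    simp only [Finset.mem_erase, Finset.mem_range]
    split_ifs <;> omega
  · simp only [Finset.mem_erase, Finset.mem_range] at ha
    simp only [Finset.mem_range]
    split_ifs <;> omega
  · simp only [Finset.mem_range] at ha
    split_ifs <;> omega
  · simp only [Finset.mem_erase, Finset.mem_range] at ha
    split_ifs <;> omega
  · rw [hdig a]
    split_ifs <;> rfl
end Aux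

/-- `(∂x^{(i)}/∂x) B = (Σ_{k=0}^{i-1} Iₙ^{(k)} ⊗ B ⊗ Iₙ^{(i-k-1)}) x^{(i-1)}`. -/
theorem fderiv_kronPow_apply_B {n : ℕ} (i : ℕ) (x B : Fin n → ℝ) :
    fderiv ℝ (kronPowVec i) x B
    = (∑ k : Fin i, mcast (dim_row k.isLt) (dim_colB k.isLt)
        (kron (kronPow k (1 : Matrix (Fin n) (Fin n) ℝ))
          (kron (cvec B) (kronPow (i - k - 1) (1 : Matrix (Fin n) (Fin n) ℝ))))).mulVec
        (kronPowVec (i - 1) x) := by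
  rcases Nat.eq_zero_or_pos i with hi | hi
  · subst hi
    have hconst : (kronPowVec 0 : (Fin n → ℝ) → Fin (n ^ 0) → ℝ)
        = fun _ => (fun j => mcast rfl rfl (1 : Matrix (Fin 1) (Fin 1) ℝ) j
            (finCongr (one_pow 0).symm 0)) := rfl
    rw [show fderiv ℝ (kronPowVec 0 : (Fin n → ℝ) → Fin (n ^ 0) → ℝ) x = 0 by
      rw [hconst]; exact (hasFDerivAt_const _ x).fderiv]
    simp only [Finset.univ_eq_empty, Finset.sum_empty, Matrix.zero_mulVec]
    rfl
  rcases Nat.eq_zero_or_pos n with hn | hn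
  · subst hn
    funext j
    have h0 : (0:ℕ) ^ i = 0 := Nat.zero_pow (by omega)
    exact absurd j.isLt (by omega)
  rw [fderiv_kronPowVec hn i x B]
  funext j
  have hswap : (∑ k : Fin i, mcast (dim_row k.isLt) (dim_colB k.isLt)
        (kron (kronPow k (1 : Matrix (Fin n) (Fin n) ℝ))
          (kron (cvec B) (kronPow (i - k - 1) (1 : Matrix (Fin n) (Fin n) ℝ))))).mulVec
        (kronPowVec (i - 1) x) j
      = ∑ k : Fin i, (mcast (dim_row k.isLt) (dim_colB k.isLt)
        (kron (kronPow k (1 : Matrix (Fin n) (Fin n) ℝ))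
          (kron (cvec B) (kronPow (i - k - 1) (1 : Matrix (Fin n) (Fin n) ℝ))))).mulVec
        (kronPowVec (i - 1) x) j := by
    simp only [Matrix.mulVec, dotProduct, Matrix.sum_apply, Finset.sum_mul]
    exact Finset.sum_comm
  rw [hswap]
  rw [Finset.sum_congr rfl fun k _ => term_entry hn k x B j]
  have hrev : ∑ k : Fin i, B (dig hn (i - ↑k - 1) j.val) *
        ∏ t ∈ (range i).erase (i - ↑k - 1), x (dig hn t j.val)
      = ∑ k : Fin i, B (dig hn ↑k j.val) *
        ∏ t ∈ (range i).erase ↑k, x (dig hn t j.val) := by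
    refine (Fintype.sum_bijective Fin.rev Fin.rev_bijective _ _ fun k => ?_).symm
    have : i - ↑(Fin.rev k) - 1 = (k : ℕ) := by
      have := k.isLt
      simp only [Fin.val_rev]
      omega
    rw [this]
  rw [hrev, ← Fin.sum_univ_eq_sum_range
    (fun t => (∏ s ∈ (range i).erase t, x (dig hn s j.val)) * B (dig hn t j.val)) i]
  exact Finset.sum_congr rfl fun k _ => mul_comm _ _
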